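/- arXiv:2203.04182 — 2 statements merged into one kernel-verified Lean document; each statement's English description precedes it below -/
import Mathlib

section
/- Fix n≥2. For a tree permutation τ of length n, every index is a left-to-right maximum of τ or a right-to-left minimum of τ but not both; and the map sending τ to the function ω_τ:[n]→{L,R}, where ω_τ(i)=L if i is a left-to-right maximum of τ and ω_τ(i)=R otherwise, is a bijection from the set 𝔗_n of tree permutations of length n onto the set of all functions ω:[n]→{L,R} with ω(1)=L and ω(n)=R. -/
/-!
Cut the positions between `c - 1` and `c`. The positions left of the cut carrying a value right
of it are exactly as many as the positions right of the cut carrying a value left of it, and each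
of the former forms an inversion with each of the latter. So in a tree permutation there is
exactly one of each at every cut: at least one by connectivity, at most one since two of each
would span a 4-cycle. It follows that the left-to-right maxima of a tree permutation `τ` are
its excedances `i < τ i`, the right-to-left minima are its deficiencies `τ i < i` (an index that
is both is isolated, one that is neither lies on a triangle), and that `τ` sends a left-to-right
maximum to the next left-to-right maximum (or to `n`) and a right-to-left minimum to the
previous right-to-left minimum (or to `1`). So `τ` is determined by its word.

Conversely, this recipe turns every word starting with `L` and ending with `R` into a
permutation with that word, and its graph is a tree: rooted at `1`, each `L` hangs from the
next `R`, and each `R` from the last `L` before the previous `R`.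
-/

/-- The permutation graph of a permutation `π` of `Fin n`: there is an edge between `i` and `j`
for every inversion, i.e. every pair `i < j` with `π i > π j`. -/
def permGraph {n : ℕ} (π : Equiv.Perm (Fin n)) : SimpleGraph (Fin n) where
  Adj i j := (i < j ∧ π j < π i) ∨ (j < i ∧ π i < π j)
  symm := ⟨by intro i j h; tauto⟩
  loopless := ⟨by intro i h; rcases h with ⟨h, _⟩ | ⟨h, _⟩ <;> exact lt_irrefl _ h⟩

/-- A tree permutation: its permutation graph is a tree. -/
def IsTreePerm {n : ℕ} (π : Equiv.Perm (Fin n)) : Prop := (permGraph π).IsTree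

/-- `i` is a left-to-right maximum of `π`: `π j < π i` for all `j < i`. -/
def IsLtrMax {n : ℕ} (π : Equiv.Perm (Fin n)) (i : Fin n) : Prop :=
  ∀ j : Fin n, j < i → π j < π i

/-- `i` is a right-to-left minimum of `π`: `π i < π j` for all `j > i`. -/
def IsRtlMin {n : ℕ} (π : Equiv.Perm (Fin n)) (i : Fin n) : Prop :=
  ∀ j : Fin n, i < j → π i < π j

open Finset

section NextPos

variable {α : Type*} [LinearOrder α] [Fintype α] {p : α → Prop} {i j k q : α}

open Classical

noncomputable def nextPos [OrderTop α] (p : α → Prop) (i : α) : α :=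
  if h : ({k | i < k ∧ p k} : Finset α).Nonempty then ({k | i < k ∧ p k} : Finset α).min' h else ⊤

noncomputable def prevPos [OrderBot α] (p : α → Prop) (j : α) : α :=
  OrderDual.ofDual (nextPos (α := αᵒᵈ) (p ∘ OrderDual.ofDual) (OrderDual.toDual j))

section OrderTop

variable [OrderTop α]

theorem nextPos_spec (p : α → Prop) (i : α) : p (nextPos p i) ∨ nextPos p i = ⊤ := by
  unfold nextPos
  split_ifs with h
  · exact Or.inl (mem_filter.1 (min'_mem _ h)).2.2
  · exact Or.inr rfl

theorem lt_nextPos (hi : i ≠ ⊤) : i < nextPos p i := by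
  unfold nextPos
  split_ifs with h
  · exact (mem_filter.1 (min'_mem _ h)).2.1
  · exact hi.lt_top

theorem le_nextPos (p : α → Prop) (i : α) : i ≤ nextPos p i := by
  unfold nextPos
  split_ifs with h
  · exact (mem_filter.1 (min'_mem _ h)).2.1.le
  · exact le_top

theorem nextPos_le (hik : i < k) (hk : p k) : nextPos p i ≤ k := by
  have hmem : k ∈ ({k | i < k ∧ p k} : Finset α) := by simp [hik, hk]
  unfold nextPos
  rw [dif_pos ⟨k, hmem⟩]
  exact min'_le _ _ hmem

theorem not_of_lt_of_lt_nextPos (hik : i < k) (hk : k < nextPos p i) : ¬ p k :=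
  fun h => (nextPos_le hik h).not_gt hk

theorem nextPos_eq (hiq : i < q) (hgap : ∀ k, i < k → k < q → ¬ p k) (hq : p q ∨ q = ⊤) :
    nextPos p i = q := by
  refine le_antisymm ?_ (not_lt.1 fun h => ?_)
  · rcases hq with hq | rfl
    exacts [nextPos_le hiq hq, le_top]
  · rcases nextPos_spec p i with h' | h'
    · exact hgap _ (lt_nextPos (hiq.trans_le le_top).ne) h h'
    · exact (h' ▸ h).not_ge le_top

end OrderTop

section OrderBot

variable [OrderBot α]

theorem prevPos_spec (p : α → Prop) (j : α) : p (prevPos p j) ∨ prevPos p j = ⊥ :=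
  nextPos_spec (α := αᵒᵈ) _ _

theorem prevPos_lt (hj : j ≠ ⊥) : prevPos p j < j :=
  lt_nextPos (α := αᵒᵈ) hj

theorem le_prevPos (hkj : k < j) (hk : p k) : k ≤ prevPos p j :=
  nextPos_le (α := αᵒᵈ) (p := p ∘ OrderDual.ofDual) hkj hk

theorem not_of_prevPos_lt_of_lt (hk : prevPos p j < k) (hkj : k < j) : ¬ p k :=
  not_of_lt_of_lt_nextPos (α := αᵒᵈ) (p := p ∘ OrderDual.ofDual) hkj hk

theorem prevPos_eq (hqj : q < j) (hgap : ∀ k, q < k → k < j → ¬ p k) (hq : p q ∨ q = ⊥) :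
    prevPos p j = q :=
  nextPos_eq (α := αᵒᵈ) (p := p ∘ OrderDual.ofDual) hqj (fun k hk hk' => hgap k hk' hk) hq

theorem prevPos_le (p : α → Prop) (j : α) : prevPos p j ≤ j :=
  le_nextPos (α := αᵒᵈ) _ _

end OrderBot

variable [BoundedOrder α]

theorem le_nextPos_prevPos (p : α → Prop) (i : α) : i ≤ nextPos p (prevPos p i) := by
  by_contra! h
  have hlt : prevPos p i < i := prevPos_lt (ne_bot_of_gt h)
  rcases nextPos_spec p (prevPos p i) with hp | htop
  · exact not_of_prevPos_lt_of_lt (lt_nextPos hlt.ne_top) h hp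
  · exact (htop ▸ h).not_ge le_top

theorem prevPos_nextPos_le (p : α → Prop) (i : α) : prevPos p (nextPos p i) ≤ i := by
  by_contra! h
  have hlt : i < nextPos p i := lt_nextPos (ne_top_of_lt h)
  rcases prevPos_spec p (nextPos p i) with hp | hbot
  · exact not_of_lt_of_lt_nextPos h (prevPos_lt hlt.ne_bot) hp
  · exact (hbot ▸ h).not_ge bot_le

theorem lt_nextPos_prevPos (hi : ¬ p i) (hi' : i ≠ ⊤) : i < nextPos p (prevPos p i) :=
  (le_nextPos_prevPos p i).lt_of_ne fun h =>
    (nextPos_spec p _).elim (fun hp => hi (h ▸ hp)) (fun ht => hi' (h ▸ ht))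

theorem prevPos_nextPos_lt (hi : ¬ p i) (hi' : i ≠ ⊥) : prevPos p (nextPos p i) < i :=
  (prevPos_nextPos_le p i).lt_of_ne fun h =>
    (prevPos_spec p _).elim (fun hp => hi (h ▸ hp)) (fun hb => hi' (h ▸ hb))

end NextPos

namespace SimpleGraph

variable {V : Type*} {G : SimpleGraph V}

theorem IsAcyclic.not_adj_of_adj_of_adj (hG : G.IsAcyclic) {a b c : V} (hab : G.Adj a b)
    (hbc : G.Adj b c) : ¬ G.Adj a c := by
  classical
  exact fun hac => hG.cliqueFree le_rfl {a, b, c} (is3Clique_triple_iff.2 ⟨hab, hac, hbc⟩)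

theorem IsAcyclic.eq_of_adj_of_adj (hG : G.IsAcyclic) {a b c d : V} (hac : a ≠ c)
    (hab : G.Adj a b) (hbc : G.Adj b c) (had : G.Adj a d) (hdc : G.Adj d c) : b = d := by
  have hpq := (hG.subsingleton_path a c).elim
    ⟨.cons hab (.cons hbc .nil), by simp [hab.ne, hbc.ne, hac]⟩
    ⟨.cons had (.cons hdc .nil), by simp [had.ne, hdc.ne, hac]⟩
  simpa using congrArg (fun p : G.Path a c => p.1.support) hpq

theorem isTree_of_parent [Finite V] (r : V) (parent : V → V) (μ : V → ℕ)
    (hparent : ∀ v ≠ r, G.Adj v (parent v) ∧ μ (parent v) < μ v)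
    (hedge : ∀ a b, G.Adj a b → a ≠ r ∧ parent a = b ∨ b ≠ r ∧ parent b = a) : G.IsTree := by
  have hconn : G.Connected := by
    refine (connected_iff_exists_forall_reachable G).2 ⟨r, fun v => ?_⟩
    induction v using (measure μ).wf.induction with
    | _ v ih =>
      rcases eq_or_ne v r with rfl | hv
      · rfl
      · exact (ih _ (hparent v hv).2).trans (hparent v hv).1.symm.reachable
  have hedges : G.edgeSet ⊆ (fun v => s(v, parent v)) '' {r}ᶜ := by
    intro e he
    induction e using Sym2.ind with
    | _ a b =>
      rcases hedge a b he with ⟨ha, rfl⟩ | ⟨hb, rfl⟩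
      exacts [⟨a, ha, rfl⟩, ⟨b, hb, Sym2.eq_swap⟩]
  refine isTree_iff_connected_and_card.2
    ⟨hconn, le_antisymm ?_ hconn.card_vert_le_card_edgeSet_add_one⟩
  calc Nat.card G.edgeSet + 1 ≤ ({r}ᶜ : Set V).ncard + 1 := by
        rw [Nat.card_coe_set_eq]
        gcongr
        exact (Set.ncard_le_ncard hedges).trans Set.ncard_image_le
    _ = Nat.card V := by
        rw [Set.ncard_compl, Set.ncard_singleton]
        have : 0 < Nat.card V := Nat.card_pos_iff.2 ⟨⟨r⟩, inferInstance⟩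
        omega

end SimpleGraph

open SimpleGraph

variable {n : ℕ} {τ : Equiv.Perm (Fin n)} {c : ℕ} {i j k v : Fin n}

def upCrossings (τ : Equiv.Perm (Fin n)) (c : ℕ) : Finset (Fin n) :=
  {k | k.val < c ∧ c ≤ (τ k).val}

def downCrossings (τ : Equiv.Perm (Fin n)) (c : ℕ) : Finset (Fin n) :=
  {k | c ≤ k.val ∧ (τ k).val < c}

@[simp] theorem mem_upCrossings : k ∈ upCrossings τ c ↔ k.val < c ∧ c ≤ (τ k).val := by
  simp [upCrossings]

@[simp] theorem mem_downCrossings : k ∈ downCrossings τ c ↔ c ≤ k.val ∧ (τ k).val < c := by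
  simp [downCrossings]

theorem card_upCrossings_eq_card_downCrossings (τ : Equiv.Perm (Fin n)) (c : ℕ) :
    #(upCrossings τ c) = #(downCrossings τ c) := by
  set A : Finset (Fin n) := {k | k.val < c}
  set B : Finset (Fin n) := {k | (τ k).val < c}
  have hAB : #A = #B := card_equiv τ.symm (by simp [A, B])
  have hup : upCrossings τ c = A \ B := by ext; simp [A, B]
  have hdown : downCrossings τ c = B \ A := by ext; simp [A, B, and_comm]
  rw [hup, hdown, card_sdiff_comm hAB]

theorem upCrossings_nonempty (hconn : (permGraph τ).Connected) (hc : 0 < c) (hcn : c < n) :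
    (upCrossings τ c).Nonempty := by
  by_contra hup
  rw [not_nonempty_iff_eq_empty] at hup
  have hdown : downCrossings τ c = ∅ := by
    rw [← card_eq_zero, ← card_upCrossings_eq_card_downCrossings, hup, card_empty]
  have hclosed : ∀ a b, (permGraph τ).Adj a b → a.val < c → b.val < c := by
    rintro a b (⟨hab, hba⟩ | ⟨hba, -⟩) ha
    · have ha' := eq_empty_iff_forall_notMem.1 hup a
      have hb' := eq_empty_iff_forall_notMem.1 hdown b
      simp only [mem_upCrossings, mem_downCrossings, not_and, not_le, not_lt] at ha' hb'
      have := Fin.lt_def.1 hba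
      have := ha' ha
      by_contra hb
      have := hb' (by omega)
      omega
    · exact (Fin.lt_def.1 hba).trans ha
  have hreach : ∀ v, Relation.ReflTransGen (permGraph τ).Adj ⟨0, by omega⟩ v → v.val < c := by
    intro v hv
    induction hv with
    | refl => exact hc
    | tail _ hadj ih => exact hclosed _ _ hadj ih
  exact (hreach ⟨c, hcn⟩ ((reachable_iff_reflTransGen _ _).1 (hconn _ _))).false

theorem card_upCrossings_le_one (hacyc : (permGraph τ).IsAcyclic) : #(upCrossings τ c) ≤ 1 := by
  by_contra! h
  obtain ⟨k₁, hk₁, k₂, hk₂, hk⟩ := one_lt_card.1 h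
  obtain ⟨l₁, hl₁, l₂, hl₂, hl⟩ :=
    one_lt_card.1 (card_upCrossings_eq_card_downCrossings τ c ▸ h)
  have hadj : ∀ k ∈ upCrossings τ c, ∀ l ∈ downCrossings τ c, (permGraph τ).Adj k l := by
    intro k hk l hl
    simp only [mem_upCrossings, mem_downCrossings] at hk hl
    exact Or.inl ⟨Fin.lt_def.2 (by omega), Fin.lt_def.2 (by omega)⟩
  exact hl (hacyc.eq_of_adj_of_adj hk (hadj _ hk₁ _ hl₁) (hadj _ hk₂ _ hl₁).symm
    (hadj _ hk₁ _ hl₂) (hadj _ hk₂ _ hl₂).symm)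

theorem isLtrMax_of_val_eq_zero (τ : Equiv.Perm (Fin n)) (hi : i.val = 0) : IsLtrMax τ i :=
  fun j hj => absurd (Fin.lt_def.1 hj) (by omega)

theorem isRtlMin_of_val_add_one_eq (τ : Equiv.Perm (Fin n)) (hi : i.val + 1 = n) : IsRtlMin τ i :=
  fun j hj => absurd (Fin.lt_def.1 hj) (by omega)

namespace IsTreePerm

variable (hτ : IsTreePerm τ)
include hτ

theorem card_upCrossings (hc : 0 < c) (hcn : c < n) : #(upCrossings τ c) = 1 :=
  le_antisymm (card_upCrossings_le_one hτ.isAcyclic)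
    (card_pos.2 (upCrossings_nonempty hτ.connected hc hcn))

theorem card_downCrossings (hc : 0 < c) (hcn : c < n) : #(downCrossings τ c) = 1 :=
  card_upCrossings_eq_card_downCrossings τ c ▸ hτ.card_upCrossings hc hcn

theorem apply_le_of_lt_of_lt_apply (hik : i < k) (hki : k < τ i) : τ k ≤ k := by
  by_contra! hk
  have := Fin.lt_def.1 hik; have := Fin.lt_def.1 hki; have := Fin.lt_def.1 hk; have := (τ i).isLt
  refine hik.ne (card_le_one.1 (hτ.card_upCrossings (c := k + 1) (by omega) (by omega)).le
    i ?_ k ?_) <;> simp only [mem_upCrossings] <;> omega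

theorem le_apply_of_apply_lt_of_lt (hjk : τ j < k) (hkj : k < j) : k ≤ τ k := by
  by_contra! hk
  have := Fin.lt_def.1 hjk; have := Fin.lt_def.1 hkj; have := Fin.lt_def.1 hk
  refine hkj.ne' (card_le_one.1 (hτ.card_downCrossings (c := k) (by omega) (by omega)).le
    j ?_ k ?_) <;> simp only [mem_downCrossings] <;> omega

theorem isLtrMax_or_isRtlMin (i : Fin n) : IsLtrMax τ i ∨ IsRtlMin τ i := by
  by_contra! h
  simp only [IsLtrMax, IsRtlMin, not_forall, not_lt, exists_prop] at h
  obtain ⟨⟨j, hji, hj⟩, ⟨k, hik, hk⟩⟩ := h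
  have hj : τ i < τ j := hj.lt_of_ne (τ.injective.ne hji.ne')
  have hk : τ k < τ i := hk.lt_of_ne (τ.injective.ne hik.ne')
  exact hτ.isAcyclic.not_adj_of_adj_of_adj (Or.inl ⟨hji, hj⟩) (Or.inl ⟨hik, hk⟩)
    (Or.inl ⟨hji.trans hik, hk.trans hj⟩)

theorem not_isLtrMax_and_isRtlMin [Nontrivial (Fin n)] (i : Fin n) :
    ¬ (IsLtrMax τ i ∧ IsRtlMin τ i) := by
  rintro ⟨hL, hR⟩
  obtain ⟨j, (⟨hij, hji⟩ | ⟨hji, hij⟩)⟩ := hτ.connected.preconnected.exists_adj_of_nontrivial i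
  exacts [(hR j hij).not_gt hji, (hL j hji).not_gt hij]

theorem isLtrMax_iff_not_isRtlMin [Nontrivial (Fin n)] (i : Fin n) :
    IsLtrMax τ i ↔ ¬ IsRtlMin τ i :=
  ⟨fun hL hR => hτ.not_isLtrMax_and_isRtlMin i ⟨hL, hR⟩, (hτ.isLtrMax_or_isRtlMin i).resolve_right⟩

theorem lt_apply_of_isLtrMax (hi : IsLtrMax τ i) (hin : i.val + 1 < n) : i < τ i := by
  obtain ⟨k, hk⟩ := card_pos.1 (hτ.card_upCrossings (c := i.val + 1) (by omega) hin).ge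
  rw [mem_upCrossings] at hk
  rcases (Fin.le_iff_val_le_val.2 (by omega : k.val ≤ i.val)).lt_or_eq with hki | rfl
  · exact Fin.lt_def.2 (by have := Fin.lt_def.1 (hi k hki); omega)
  · exact Fin.lt_def.2 (by omega)

theorem apply_lt_of_isRtlMin (hj : IsRtlMin τ j) (hj0 : 0 < j.val) : τ j < j := by
  obtain ⟨k, hk⟩ := card_pos.1 (hτ.card_downCrossings (c := j.val) hj0 j.isLt).ge
  rw [mem_downCrossings] at hk
  rcases (Fin.le_iff_val_le_val.2 hk.1).lt_or_eq with hjk | rfl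
  · exact Fin.lt_def.2 (by have := Fin.lt_def.1 (hj k hjk); omega)
  · exact Fin.lt_def.2 hk.2

theorem isLtrMax_iff_lt_apply [Nontrivial (Fin n)] : IsLtrMax τ i ↔ i < τ i := by
  refine ⟨fun hi => hτ.lt_apply_of_isLtrMax hi ?_, fun hlt => ?_⟩
  · by_contra! hin
    exact hτ.not_isLtrMax_and_isRtlMin i ⟨hi, isRtlMin_of_val_add_one_eq τ (by omega)⟩
  · refine (hτ.isLtrMax_or_isRtlMin i).resolve_right fun hi => ?_
    rcases Nat.eq_zero_or_pos i.val with h0 | h0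
    · exact hτ.not_isLtrMax_and_isRtlMin i ⟨isLtrMax_of_val_eq_zero τ h0, hi⟩
    · exact (hτ.apply_lt_of_isRtlMin hi h0).not_gt hlt

theorem isRtlMin_iff_apply_lt [Nontrivial (Fin n)] : IsRtlMin τ i ↔ τ i < i := by
  refine ⟨fun hi => hτ.apply_lt_of_isRtlMin hi ?_, fun hlt => ?_⟩
  · by_contra! h0
    exact hτ.not_isLtrMax_and_isRtlMin i ⟨isLtrMax_of_val_eq_zero τ (by omega), hi⟩
  · exact (hτ.isLtrMax_or_isRtlMin i).resolve_left fun hi =>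
      ((hτ.isLtrMax_iff_lt_apply).1 hi).not_gt hlt

theorem apply_eq_nextPos [NeZero n] [Nontrivial (Fin n)] (hi : IsLtrMax τ i) :
    τ i = nextPos (IsLtrMax τ) i := by
  have hlt : i < τ i := hτ.isLtrMax_iff_lt_apply.1 hi
  refine (nextPos_eq hlt (fun k hik hki hk => ?_) (or_iff_not_imp_right.2 fun htop => ?_)).symm
  · exact (hτ.apply_le_of_lt_of_lt_apply hik hki).not_gt (hτ.isLtrMax_iff_lt_apply.1 hk)
  · have hq : (τ i).val + 1 < n := by
      have := Fin.val_top n ▸ Fin.val_ne_of_ne htop; have := (τ i).isLt; omega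
    -- whatever crosses the cut right after `τ i` can only sit at position `τ i` itself
    obtain ⟨k, hk⟩ := card_pos.1 (hτ.card_upCrossings (c := (τ i).val + 1) (by omega) hq).ge
    rw [mem_upCrossings] at hk
    rw [hτ.isLtrMax_iff_lt_apply]
    rcases lt_trichotomy k i with hki | rfl | hik
    · exact absurd (hi k hki) (not_lt.2 (Fin.le_iff_val_le_val.2 (by omega)))
    · omega
    · rcases (Fin.le_iff_val_le_val.2 (by omega : k.val ≤ (τ i).val)).lt_or_eq with hkq | rfl
      · exact absurd (hτ.apply_le_of_lt_of_lt_apply hik hkq) (not_le.2 (Fin.lt_def.2 (by omega)))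
      · exact Fin.lt_def.2 (by omega)

theorem apply_eq_prevPos [NeZero n] [Nontrivial (Fin n)] (hj : IsRtlMin τ j) :
    τ j = prevPos (IsRtlMin τ) j := by
  have hlt : τ j < j := hτ.isRtlMin_iff_apply_lt.1 hj
  refine (prevPos_eq hlt (fun k hjk hkj hk => ?_) (or_iff_not_imp_right.2 fun hbot => ?_)).symm
  · exact (hτ.le_apply_of_apply_lt_of_lt hjk hkj).not_gt (hτ.isRtlMin_iff_apply_lt.1 hk)
  · have hp : 0 < (τ j).val := by
      exact Nat.pos_of_ne_zero fun h => hbot (Fin.ext (by simp [h, bot_eq_zero]))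
    -- whatever crosses the cut right before `τ j` can only sit at position `τ j` itself
    obtain ⟨k, hk⟩ := card_pos.1 (hτ.card_downCrossings (c := (τ j).val) hp (τ j).isLt).ge
    rw [mem_downCrossings] at hk
    rw [hτ.isRtlMin_iff_apply_lt]
    rcases lt_trichotomy j k with hjk | rfl | hkj
    · exact absurd (hj k hjk) (not_lt.2 (Fin.le_iff_val_le_val.2 (by omega)))
    · omega
    · rcases (Fin.le_iff_val_le_val.2 hk.1).lt_or_eq with hpk | rfl
      · exact absurd (hτ.le_apply_of_apply_lt_of_lt hpk hkj) (not_le.2 (Fin.lt_def.2 (by omega)))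
      · exact Fin.lt_def.2 hk.2

end IsTreePerm

section Word

variable [NeZero n] (ω : Fin n → Bool)

noncomputable def wordFun (i : Fin n) : Fin n :=
  if ω i then nextPos (ω · = true) i else prevPos (ω · = false) i

variable {ω}

theorem wordFun_of_true (h : ω i = true) : wordFun ω i = nextPos (ω · = true) i := by
  simp [wordFun, h]

theorem wordFun_of_false (h : ω i = false) : wordFun ω i = prevPos (ω · = false) i := by
  simp [wordFun, h]

variable (h0 : ω ⊥ = true) (hl : ω ⊤ = false)
include h0 hl

theorem wordFun_lt_wordFun (hij : i < j) (h : ω i ≤ ω j) : wordFun ω i < wordFun ω j := by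
  rw [Bool.le_iff_imp] at h
  have hi : ω i = false → i ≠ ⊥ := fun hi h => by simp_all
  have hj : ω j = true → j ≠ ⊤ := fun hj h => by simp_all
  cases hωi : ω i <;> cases hωj : ω j
  · rw [wordFun_of_false hωi, wordFun_of_false hωj]
    exact (prevPos_lt (hi hωi)).trans_le (le_prevPos hij hωi)
  · rw [wordFun_of_false hωi, wordFun_of_true hωj]
    exact ((prevPos_le _ _).trans_lt hij).trans (lt_nextPos (hj hωj))
  · simp [hωi, hωj] at h
  · rw [wordFun_of_true hωi, wordFun_of_true hωj]
    exact (nextPos_le hij hωj).trans_lt (lt_nextPos (hj hωj))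

theorem wordFun_ne (hi : ω i = true) (hj : ω j = false) : wordFun ω i ≠ wordFun ω j := by
  rw [wordFun_of_true hi, wordFun_of_false hj]
  intro h
  have hix : i < nextPos (ω · = true) i := lt_nextPos fun h' => by simp_all
  have hxj : prevPos (ω · = false) j < j := prevPos_lt fun h' => by simp_all
  rcases nextPos_spec (ω · = true) i with hL | htop
  · rcases prevPos_spec (ω · = false) j with hR | hbot
    · simp_all
    · exact (hbot ▸ h ▸ hix).not_ge bot_le
  · exact (htop ▸ h ▸ hxj).not_ge le_top

theorem wordFun_injective : Function.Injective (wordFun ω) := by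
  intro i j h
  by_contra hij
  wlog hlt : i < j generalizing i j
  · exact this h.symm (Ne.symm hij) ((Ne.symm hij).lt_of_le (not_lt.1 hlt))
  rcases le_or_gt (ω i) (ω j) with hle | hgt
  · exact (wordFun_lt_wordFun h0 hl hlt hle).ne h
  · obtain ⟨hj, hi⟩ := Bool.lt_iff.1 hgt
    exact wordFun_ne h0 hl hi hj h

noncomputable def wordPerm : Equiv.Perm (Fin n) :=
  Equiv.ofBijective (wordFun ω) (wordFun_injective h0 hl).bijective_of_finite

@[simp] theorem wordPerm_apply (i : Fin n) : wordPerm h0 hl i = wordFun ω i := rfl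

theorem isLtrMax_wordPerm_iff : IsLtrMax (wordPerm h0 hl) i ↔ ω i = true := by
  refine ⟨fun h => ?_, fun hi j hji => wordFun_lt_wordFun h0 hl hji (hi ▸ Bool.le_true _)⟩
  by_contra hi
  rw [Bool.not_eq_true] at hi
  have hi0 : i ≠ ⊥ := fun h' => by simp_all
  have hj : ω (prevPos (ω · = true) i) = true := (prevPos_spec _ i).elim id fun h' => h' ▸ h0
  refine (h _ (prevPos_lt (p := (ω · = true)) hi0)).not_ge ?_
  rw [wordPerm_apply, wordPerm_apply, wordFun_of_true hj, wordFun_of_false hi]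
  exact (prevPos_le _ _).trans (le_nextPos_prevPos _ _)

theorem true_false_of_inversion (hij : i < j) (h : wordFun ω j < wordFun ω i) :
    ω i = true ∧ ω j = false :=
  (Bool.lt_iff.1 (not_le.1 fun hle => (wordFun_lt_wordFun h0 hl hij hle).not_gt h)).symm

theorem wordPerm_adj_nextPos (hv : ω v = true) :
    (permGraph (wordPerm h0 hl)).Adj v (nextPos (ω · = false) v) := by
  have hv' : v ≠ ⊤ := fun h => by simp_all
  have hb : ω (nextPos (ω · = false) v) = false := (nextPos_spec _ v).elim id fun h => h ▸ hl
  refine Or.inl ⟨lt_nextPos hv', ?_⟩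
  rw [wordPerm_apply, wordPerm_apply, wordFun_of_true hv, wordFun_of_false hb]
  exact (prevPos_nextPos_le _ _).trans_lt (lt_nextPos hv')

theorem wordPerm_adj_prevPos_prevPos (hv : ω v = false) :
    (permGraph (wordPerm h0 hl)).Adj v (prevPos (ω · = true) (prevPos (ω · = false) v)) := by
  have hxv : prevPos (ω · = false) v < v := prevPos_lt fun h => by simp_all
  have hy : ω (prevPos (ω · = true) (prevPos (ω · = false) v)) = true :=
    (prevPos_spec _ _).elim id fun h => h ▸ h0
  refine Or.inr ⟨(prevPos_le _ _).trans_lt hxv, ?_⟩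
  rw [wordPerm_apply, wordPerm_apply, wordFun_of_true hy, wordFun_of_false hv]
  rcases prevPos_spec (ω · = false) v with hx | hx
  · exact lt_nextPos_prevPos (by simp [hx]) hxv.ne_top
  · rw [hx, le_bot_iff.1 (prevPos_le _ ⊥)]
    exact lt_nextPos fun h => by simp_all

theorem nextPos_eq_of_inversion (hij : i < j) (hji : wordFun ω j < wordFun ω i)
    (h : prevPos (ω · = false) j < i) : nextPos (ω · = false) i = j :=
  nextPos_eq hij (fun _ hik hkj hk => (le_prevPos hkj hk).not_gt (h.trans hik))
    (Or.inl (true_false_of_inversion h0 hl hij hji).2)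

theorem prevPos_prevPos_eq_of_inversion (hij : i < j) (hji : wordFun ω j < wordFun ω i)
    (h : i ≤ prevPos (ω · = false) j) : prevPos (ω · = true) (prevPos (ω · = false) j) = i := by
  obtain ⟨hi, hj⟩ := true_false_of_inversion h0 hl hij hji
  rw [wordFun_of_true hi, wordFun_of_false hj] at hji
  rcases h.lt_or_eq with h | h
  · exact prevPos_eq h (fun _ hik hkj hk => ((nextPos_le hik hk).trans_lt (hkj.trans hji)).false)
      (Or.inl hi)
  · have hbot : i = ⊥ := (prevPos_spec (ω · = false) j).elim (fun h' => by simp_all) h.trans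
    rw [← h, hbot]
    exact le_bot_iff.1 (prevPos_le _ _)

theorem isTreePerm_wordPerm : IsTreePerm (wordPerm h0 hl) := by
  have hinv : ∀ i j, i < j → wordFun ω j < wordFun ω i →
      (i ≠ ⊥ ∧ nextPos (ω · = false) i = j) ∨
      (j ≠ ⊥ ∧ prevPos (ω · = true) (prevPos (ω · = false) j) = i) := by
    intro i j hij hji
    obtain ⟨hi, hj⟩ := true_false_of_inversion h0 hl hij hji
    rcases lt_or_ge (prevPos (ω · = false) j) i with h | h
    · exact Or.inl ⟨ne_bot_of_gt h, nextPos_eq_of_inversion h0 hl hij hji h⟩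
    · exact Or.inr ⟨fun h' => by simp_all, prevPos_prevPos_eq_of_inversion h0 hl hij hji h⟩
  refine isTree_of_parent ⊥
    (fun v => if ω v then nextPos (ω · = false) v
      else prevPos (ω · = true) (prevPos (ω · = false) v))
    (fun v => if ω v then 2 * v.val else 2 * (prevPos (ω · = false) v).val + 1)
    (fun v hv => ?_) ?_
  · cases hω : ω v
    · have hy : ω (prevPos (ω · = true) (prevPos (ω · = false) v)) = true :=
        (prevPos_spec _ _).elim id fun h => h ▸ h0
      have := Fin.le_iff_val_le_val.1 (prevPos_le (ω · = true) (prevPos (ω · = false) v))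
      simp only [hy, Bool.false_eq_true, if_false, if_true]
      exact ⟨wordPerm_adj_prevPos_prevPos h0 hl hω, by omega⟩
    · have hb : ω (nextPos (ω · = false) v) = false := (nextPos_spec _ v).elim id fun h => h ▸ hl
      have := Fin.lt_def.1 (prevPos_nextPos_lt (p := (ω · = false)) (by simp [hω]) hv)
      simp only [hb, Bool.false_eq_true, if_false, if_true]
      exact ⟨wordPerm_adj_nextPos h0 hl hω, by omega⟩
  · rintro i j (⟨hij, hji⟩ | ⟨hji, hij⟩)
    · have ⟨hi, hj⟩ := true_false_of_inversion h0 hl hij hji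
      simpa [hi, hj] using hinv i j hij hji
    · have ⟨hj, hi⟩ := true_false_of_inversion h0 hl hji hij
      simpa [hi, hj, or_comm] using hinv j i hji hij

end Word

theorem IsTreePerm.eq_wordPerm [NeZero n] [Nontrivial (Fin n)] {ω : Fin n → Bool}
    (h0 : ω ⊥ = true) (hl : ω ⊤ = false) (hτ : IsTreePerm τ)
    (hcode : ∀ i, ω i = true ↔ IsLtrMax τ i) : τ = wordPerm h0 hl := by
  have hL : IsLtrMax τ = (ω · = true) := funext fun i => propext (hcode i).symm
  have hR : IsRtlMin τ = (ω · = false) := funext fun i => propext <| by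
    rw [← Bool.not_eq_true, hcode, hτ.isLtrMax_iff_not_isRtlMin, not_not]
  ext i
  cases hi : ω i
  · rw [wordPerm_apply, wordFun_of_false hi, ← hR, ← hτ.apply_eq_prevPos (hR ▸ hi)]
  · rw [wordPerm_apply, wordFun_of_true hi, ← hL, ← hτ.apply_eq_nextPos (hL ▸ hi)]

/-- For `n ≥ 2`: in a tree permutation every index is a left-to-right maximum or a
right-to-left minimum but not both; and encoding a tree permutation `τ` by the word
`ω_τ : Fin n → Bool` (with `true` = `L` at left-to-right maxima and `false` = `R`
elsewhere) gives a bijection from the set of tree permutations of length `n` onto the set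
of words `ω` with `ω 1 = L` and `ω n = R`: every tree permutation has its code in this set
of words, and to each such word corresponds a unique tree permutation. -/
theorem treePerm_code_bijection (n : ℕ) (hn : 2 ≤ n) :
    (∀ τ : Equiv.Perm (Fin n), IsTreePerm τ →
      ∀ i : Fin n, IsLtrMax τ i ↔ ¬ IsRtlMin τ i) ∧
    (∀ τ : Equiv.Perm (Fin n), IsTreePerm τ →
      IsLtrMax τ ⟨0, by omega⟩ ∧ ¬ IsLtrMax τ ⟨n - 1, by omega⟩) ∧
    (∀ ω : Fin n → Bool, ω ⟨0, by omega⟩ = true → ω ⟨n - 1, by omega⟩ = false →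
      ∃! τ : Equiv.Perm (Fin n), IsTreePerm τ ∧
        ∀ i : Fin n, (ω i = true ↔ IsLtrMax τ i)) := by
  have : NeZero n := ⟨by omega⟩
  have : Nontrivial (Fin n) := Fin.nontrivial_iff_two_le.2 hn
  refine ⟨fun τ hτ => hτ.isLtrMax_iff_not_isRtlMin, fun τ hτ => ?_, fun ω h0 hl => ?_⟩
  · refine ⟨isLtrMax_of_val_eq_zero τ rfl, fun h => ?_⟩
    exact (hτ.isLtrMax_iff_not_isRtlMin _).1 h (isRtlMin_of_val_add_one_eq τ (by simp; omega))
  · have h0 : ω ⊥ = true := h0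
    have hl : ω ⊤ = false := hl
    exact ⟨wordPerm h0 hl,
      ⟨isTreePerm_wordPerm h0 hl, fun i => (isLtrMax_wordPerm_iff h0 hl).symm⟩,
      fun τ ⟨hτ, hcode⟩ => hτ.eq_wordPerm h0 hl hcode⟩
end

section
/- Let b ≥ 1 and let ℓ_1,…,ℓ_b and r_1,…,r_b be positive integers. For i∈[b] and positive integers ℓ', r', define α_{L,i}(ℓ') = C(ℓ'−1+[i=1 and ℓ_1>1]+[i=b and r_b=1], ℓ_i−1+[i=b and r_b=1]) and α_{R,i}(r') = C(r'−1+[i=b and r_b>1]+[i=1 and ℓ_1=1], r_i−1+[i=1 and ℓ_1=1]), where [·] denotes the indicator (0 or 1) and C the binomial coefficient. If L_1,…,L_b,R_1,…,R_b are independent random variables, each with P(=ℓ)=2^{−ℓ} for every integer ℓ≥1, then E[ ∏_{i=1}^b α_{L,i}(L_i)·α_{R,i}(R_i) ] = 4. In particular, this expectation does not depend on b or on the integers ℓ_1,…,ℓ_b, r_1,…,r_b. -/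
open MeasureTheory ProbabilityTheory
open scoped ENNReal

/-!
Under independence the expectation factors into `∏ᵢ E[α_{L,i}(Lᵢ)] E[α_{R,i}(Rᵢ)]`. For `X`
geometric with parameter `1/2` and `a ≤ k`, the negative binomial series gives
`E[C(X - 1 + a, k)] = ∑ₙ C(n + a, k) 2^{-(n+1)} = 2^a`, and every α-factor has this shape, with
`a` the sum of the indicators in its first argument. Over all `i`, exactly two of these
indicators equal one: one at `i = 1` (in `α_L` or `α_R` according as `ℓ₁ > 1` or `ℓ₁ = 1`) and
one at `i = b` (according as `r_b = 1` or `r_b > 1`). So the expectation is `2 ^ 2 = 4`.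
-/

/-- `α_{L,i}(ℓ') = C(ℓ'−1+[i=1 ∧ ℓ_1>1]+[i=b ∧ r_b=1], ℓ_i−1+[i=b ∧ r_b=1])`, where the
blocks are indexed by `i : Fin b` (so `i = 1` in the paper corresponds to `(i : ℕ) = 0`
and `i = b` to `(i : ℕ) = b − 1`). -/
def alphaL {b : ℕ} (ℓ r : Fin b → ℕ) (i : Fin b) (x : ℕ) : ℕ :=
  Nat.choose
    (x - 1 + (if (i : ℕ) = 0 ∧ 1 < ℓ i then 1 else 0) +
      (if (i : ℕ) = b - 1 ∧ r i = 1 then 1 else 0))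
    (ℓ i - 1 + (if (i : ℕ) = b - 1 ∧ r i = 1 then 1 else 0))

/-- `α_{R,i}(r') = C(r'−1+[i=b ∧ r_b>1]+[i=1 ∧ ℓ_1=1], r_i−1+[i=1 ∧ ℓ_1=1])`. -/
def alphaR {b : ℕ} (ℓ r : Fin b → ℕ) (i : Fin b) (x : ℕ) : ℕ :=
  Nat.choose
    (x - 1 + (if (i : ℕ) = b - 1 ∧ 1 < r i then 1 else 0) +
      (if (i : ℕ) = 0 ∧ ℓ i = 1 then 1 else 0))
    (r i - 1 + (if (i : ℕ) = 0 ∧ ℓ i = 1 then 1 else 0))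

lemma hasSum_choose_add_mul_geometric {𝕜 : Type*} [NormedField 𝕜] [CompleteSpace 𝕜]
    {a k : ℕ} (hak : a ≤ k) {r : 𝕜} (hr : ‖r‖ < 1) :
    HasSum (fun n : ℕ => ((n + a).choose k : 𝕜) * r ^ n)
      (r ^ (k - a) / (1 - r) ^ (k + 1)) := by
  rw [← hasSum_nat_add_iff' (k - a)]
  have hvanish : ∑ n ∈ Finset.range (k - a), ((n + a).choose k : 𝕜) * r ^ n = 0 :=
    Finset.sum_eq_zero fun n hn => by
      rw [Nat.choose_eq_zero_of_lt (by rw [Finset.mem_range] at hn; omega), Nat.cast_zero,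
        zero_mul]
  have hshift : (fun n => ((n + (k - a) + a).choose k : 𝕜) * r ^ (n + (k - a))) =
      fun n => ((n + k).choose k : 𝕜) * r ^ n * r ^ (k - a) := by
    funext n
    rw [show n + (k - a) + a = n + k by omega, pow_add, mul_assoc]
  rw [hvanish, sub_zero, hshift, div_eq_inv_mul, ← one_div]
  exact (hasSum_choose_mul_geometric_of_norm_lt_one k hr).mul_right _

lemma hasSum_choose_add_mul_half_pow_succ {a k : ℕ} (hak : a ≤ k) :
    HasSum (fun n : ℕ => ((n + a).choose k : ℝ) * (1 / 2) ^ (n + 1)) (2 ^ a) := by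
  have h := (hasSum_choose_add_mul_geometric hak (r := (1 / 2 : ℝ)) (by norm_num)).mul_right
    (1 / 2)
  obtain ⟨c, rfl⟩ := Nat.exists_eq_add_of_le hak
  have hvalue : (1 / 2 : ℝ) ^ (a + c - a) / (1 - 1 / 2) ^ (a + c + 1) * (1 / 2) = 2 ^ a := by
    rw [Nat.add_sub_cancel_left, show (1 : ℝ) - 1 / 2 = 1 / 2 by norm_num, pow_succ, pow_add]
    field_simp
    rw [← mul_pow]
    norm_num
  simpa only [hvalue, mul_assoc, ← pow_succ] using h

lemma lintegral_prod_mul_prod_of_iIndepFun {Ω ι β : Type*} [MeasurableSpace Ω]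
    [MeasurableSpace β] [DiscreteMeasurableSpace β] {μ : Measure Ω} [Fintype ι]
    {X Y : ι → Ω → β} (hX : ∀ i, Measurable (X i)) (hY : ∀ i, Measurable (Y i))
    (hXY : iIndepFun (fun j => Sum.elim X Y j) μ) (f g : ι → β → ℝ≥0∞) :
    ∫⁻ ω, ∏ i, f i (X i ω) * g i (Y i ω) ∂μ =
      ∏ i, (∫⁻ ω, f i (X i ω) ∂μ) * ∫⁻ ω, g i (Y i ω) ∂μ := by
  have hmeas : ∀ j, Measurable fun ω => Sum.elim f g j (Sum.elim X Y j ω) := by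
    rintro (i | i)
    · exact Measurable.of_discrete.comp (hX i)
    · exact Measurable.of_discrete.comp (hY i)
  have h := lintegral_prod_eq_prod_lintegral_of_indepFun Finset.univ _
    (hXY.comp (fun j => Sum.elim f g j) fun _ => .of_discrete) hmeas
  simpa only [Fintype.prod_sum_type, Sum.elim_inl, Sum.elim_inr, Function.comp_apply,
    Finset.prod_mul_distrib] using h

lemma ite_and_one_lt_le_sub_one (p : Prop) [Decidable p] (n : ℕ) :
    (if p ∧ 1 < n then 1 else 0) ≤ n - 1 := by
  split_ifs with h
  · exact Nat.le_sub_of_add_le h.2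
  · exact Nat.zero_le _

section GeometricHalf

variable {Ω : Type*} [MeasurableSpace Ω] {μ : Measure Ω} {X : Ω → ℕ}

lemma lintegral_comp_eq_tsum_mul_measure (hX : Measurable X) (g : ℕ → ℝ≥0∞) :
    ∫⁻ ω, g (X ω) ∂μ = ∑' n, g n * μ {ω | X ω = n} := by
  rw [← lintegral_map measurable_from_nat hX, lintegral_countable']
  exact tsum_congr fun n => by rw [Measure.map_apply hX (measurableSet_singleton n)]; rfl

variable [IsProbabilityMeasure μ] (hX : Measurable X)
  (hdist : ∀ x : ℕ, 1 ≤ x → μ {ω | X ω = x} = ENNReal.ofReal ((1 / 2 : ℝ) ^ x))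
include hX hdist

lemma measure_eq_zero_of_geometric_half : μ {ω | X ω = 0} = 0 := by
  have hs : HasSum (fun n : ℕ => (1 / 2 : ℝ) ^ (n + 1)) 1 := by
    have h := (hasSum_geometric_of_lt_one (r := (1 / 2 : ℝ)) (by norm_num) (by norm_num)).mul_left
      (1 / 2)
    norm_num [← pow_succ'] at h
    exact h
  have htail : ∑' n : ℕ, μ {ω | X ω = n + 1} = 1 := by
    rw [tsum_congr fun n => hdist (n + 1) n.succ_pos,
      ← ENNReal.ofReal_tsum_of_nonneg (fun n => by positivity) hs.summable, hs.tsum_eq,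
      ENNReal.ofReal_one]
  have htotal := lintegral_comp_eq_tsum_mul_measure (μ := μ) hX fun _ => 1
  simp only [lintegral_const, measure_univ, one_mul] at htotal
  rw [tsum_eq_zero_add' ENNReal.summable, htail] at htotal
  exact (ENNReal.add_left_inj ENNReal.one_ne_top).1 (htotal.symm.trans (zero_add 1).symm)

lemma lintegral_choose_sub_one_add_of_geometric_half {a k : ℕ} (hak : a ≤ k) :
    ∫⁻ ω, ((X ω - 1 + a).choose k : ℝ≥0∞) ∂μ = 2 ^ a := by
  have hs := hasSum_choose_add_mul_half_pow_succ hak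
  have hterm : ∀ n : ℕ, ((n + 1 - 1 + a).choose k : ℝ≥0∞) * μ {ω | X ω = n + 1} =
      ENNReal.ofReal (((n + a).choose k : ℝ) * (1 / 2) ^ (n + 1)) := fun n => by
    rw [hdist (n + 1) n.succ_pos, Nat.add_sub_cancel, ENNReal.ofReal_mul (by positivity),
      ENNReal.ofReal_natCast]
  rw [lintegral_comp_eq_tsum_mul_measure hX fun n => ((n - 1 + a).choose k : ℝ≥0∞),
    tsum_eq_zero_add' ENNReal.summable, measure_eq_zero_of_geometric_half hX hdist, mul_zero,
    zero_add, tsum_congr hterm,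
    ← ENNReal.ofReal_tsum_of_nonneg (fun n => by positivity) hs.summable, hs.tsum_eq,
    ENNReal.ofReal_pow zero_le_two, ENNReal.ofReal_ofNat]

lemma lintegral_alphaL_comp {b : ℕ} (ℓ r : Fin b → ℕ) (i : Fin b) :
    ∫⁻ ω, (alphaL ℓ r i (X ω) : ℝ≥0∞) ∂μ =
      2 ^ ((if (i : ℕ) = 0 ∧ 1 < ℓ i then 1 else 0) +
        (if (i : ℕ) = b - 1 ∧ r i = 1 then 1 else 0)) := by
  simp only [alphaL, add_assoc]
  exact lintegral_choose_sub_one_add_of_geometric_half hX hdist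
    (Nat.add_le_add_right (ite_and_one_lt_le_sub_one _ _) _)

lemma lintegral_alphaR_comp {b : ℕ} (ℓ r : Fin b → ℕ) (i : Fin b) :
    ∫⁻ ω, (alphaR ℓ r i (X ω) : ℝ≥0∞) ∂μ =
      2 ^ ((if (i : ℕ) = b - 1 ∧ 1 < r i then 1 else 0) +
        (if (i : ℕ) = 0 ∧ ℓ i = 1 then 1 else 0)) := by
  simp only [alphaR, add_assoc]
  exact lintegral_choose_sub_one_add_of_geometric_half hX hdist
    (Nat.add_le_add_right (ite_and_one_lt_le_sub_one _ _) _)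

end GeometricHalf

lemma Fin.sum_ite_val_eq_and {b c : ℕ} (hc : c < b) (P : Fin b → Prop) [DecidablePred P] :
    (∑ i : Fin b, if (i : ℕ) = c ∧ P i then 1 else 0) = if P ⟨c, hc⟩ then 1 else 0 := by
  rw [Fintype.sum_eq_single ⟨c, hc⟩ fun i hi => if_neg fun h => hi (Fin.ext h.1)]
  simp

lemma sum_alpha_exponents_eq_two {b : ℕ} (hb : 1 ≤ b) (ℓ r : Fin b → ℕ)
    (hℓ : 1 ≤ ℓ ⟨0, hb⟩) (hr : 1 ≤ r ⟨b - 1, Nat.sub_lt hb one_pos⟩) :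
    ∑ i : Fin b, ((if (i : ℕ) = 0 ∧ 1 < ℓ i then 1 else 0) +
        (if (i : ℕ) = b - 1 ∧ r i = 1 then 1 else 0) +
      ((if (i : ℕ) = b - 1 ∧ 1 < r i then 1 else 0) +
        (if (i : ℕ) = 0 ∧ ℓ i = 1 then 1 else 0))) = 2 := by
  simp only [Finset.sum_add_distrib, Fin.sum_ite_val_eq_and hb,
    Fin.sum_ite_val_eq_and (Nat.sub_lt hb one_pos)]
  split_ifs <;> omega

/-- If `L_1,…,L_b, R_1,…,R_b` are independent random variables, each with the geometric
distribution `P(· = x) = 2^{−x}` for `x ≥ 1`, then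
`E[ ∏_{i=1}^b α_{L,i}(L_i) α_{R,i}(R_i) ] = 4`; in particular this expectation does not
depend on `b` nor on the integers `ℓ_1,…,ℓ_b, r_1,…,r_b`. -/
theorem expectation_product_alpha_geometric {Ω : Type*} [MeasurableSpace Ω]
    (μ : Measure Ω) [IsProbabilityMeasure μ]
    (b : ℕ) (hb : 1 ≤ b) (ℓ r : Fin b → ℕ) (hℓ : ∀ i, 1 ≤ ℓ i) (hr : ∀ i, 1 ≤ r i)
    (L R : Fin b → Ω → ℕ)
    (hLmeas : ∀ i, Measurable (L i)) (hRmeas : ∀ i, Measurable (R i))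
    (hindep : iIndepFun
      (fun j : Fin b ⊕ Fin b => Sum.elim L R j) μ)
    (hLdist : ∀ i, ∀ x : ℕ, 1 ≤ x → μ {ω | L i ω = x} = ENNReal.ofReal ((1 / 2 : ℝ) ^ x))
    (hRdist : ∀ i, ∀ x : ℕ, 1 ≤ x → μ {ω | R i ω = x} = ENNReal.ofReal ((1 / 2 : ℝ) ^ x)) :
    (∫ ω, ∏ i : Fin b, ((alphaL ℓ r i (L i ω) : ℝ) * (alphaR ℓ r i (R i ω) : ℝ)) ∂μ) = 4 := by
  set F : Ω → ℝ≥0∞ := fun ω => ∏ i, (alphaL ℓ r i (L i ω) : ℝ≥0∞) * alphaR ℓ r i (R i ω)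
  have hF : ∫⁻ ω, F ω ∂μ = 4 := by
    rw [lintegral_prod_mul_prod_of_iIndepFun hLmeas hRmeas hindep (fun i x => alphaL ℓ r i x)
        (fun i x => alphaR ℓ r i x),
      Finset.prod_congr rfl fun i _ => by
        rw [lintegral_alphaL_comp (hLmeas i) (hLdist i),
          lintegral_alphaR_comp (hRmeas i) (hRdist i), ← pow_add],
      Finset.prod_pow_eq_pow_sum, sum_alpha_exponents_eq_two hb ℓ r (hℓ _) (hr _)]
    norm_num
  have hF_meas : Measurable F := by fun_prop
  have hF_finite : ∀ ω, F ω < ∞ := fun ω => ENNReal.prod_lt_top fun i _ =>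
    ENNReal.mul_lt_top (ENNReal.natCast_lt_top _) (ENNReal.natCast_lt_top _)
  calc ∫ ω, ∏ i, ((alphaL ℓ r i (L i ω) : ℝ) * (alphaR ℓ r i (R i ω) : ℝ)) ∂μ
      = ∫ ω, (F ω).toReal ∂μ := by
        simp only [F, ENNReal.toReal_prod, ENNReal.toReal_mul, ENNReal.toReal_natCast]
    _ = 4 := by
        rw [integral_toReal hF_meas.aemeasurable (ae_of_all _ hF_finite), hF]
        norm_num
end
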